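/- arXiv:2310.09566 — 5 statements merged into one kernel-verified Lean document; each statement's English description precedes it below -/
import Mathlib

section
/- The characteristic fluid speeds λ± = ((1-c²)vₓ ± (c/Γ)√Q)/(1 - c²|v|²), where Q = 1 - vₓ² - c²(v_y² + v_z²), satisfy |λ±| < 1 whenever |v| < 1 and 0 < c < 1. -/
/-- The characteristic fluid speeds
`λ± = ((1-c²)vx ± (c/Γ)√Q)/(1 - c²|v|²)` satisfy `|λ±| < 1`
whenever `|v| < 1` and `0 < c < 1`. -/
theorem char_speeds_subluminal (c vx vy vz Γ Q lamP lamM : ℝ)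
    (hv : vx ^ 2 + vy ^ 2 + vz ^ 2 < 1)
    (hΓ : Γ = 1 / Real.sqrt (1 - (vx ^ 2 + vy ^ 2 + vz ^ 2)))
    (hc0 : 0 < c) (hc1 : c < 1)
    (hQ : Q = 1 - vx ^ 2 - c ^ 2 * (vy ^ 2 + vz ^ 2))
    (hP : lamP = ((1 - c ^ 2) * vx + (c / Γ) * Real.sqrt Q) /
      (1 - c ^ 2 * (vx ^ 2 + vy ^ 2 + vz ^ 2)))
    (hM : lamM = ((1 - c ^ 2) * vx - (c / Γ) * Real.sqrt Q) /
      (1 - c ^ 2 * (vx ^ 2 + vy ^ 2 + vz ^ 2))) :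
    |lamP| < 1 ∧ |lamM| < 1 := by
  have hr0 : (0:ℝ) ≤ vy ^ 2 + vz ^ 2 := by positivity
  have hx2 : vx ^ 2 < 1 := by nlinarith
  have hx1 : vx < 1 := by nlinarith [sq_nonneg (vx - 1)]
  have hx1' : -1 < vx := by nlinarith [sq_nonneg (vx + 1)]
  have hc2 : c ^ 2 < 1 := by nlinarith
  have h1s : 0 < 1 - (vx ^ 2 + vy ^ 2 + vz ^ 2) := by linarith
  have hu0 : 0 < Real.sqrt (1 - (vx ^ 2 + vy ^ 2 + vz ^ 2)) := Real.sqrt_pos.mpr h1s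
  have hQpos : 0 < Q := by
    rw [hQ]
    nlinarith [mul_nonneg (by linarith : (0:ℝ) ≤ 1 - c ^ 2) hr0]
  set u := Real.sqrt (1 - (vx ^ 2 + vy ^ 2 + vz ^ 2)) with hu
  set q := Real.sqrt Q with hqdef
  have hu2 : u ^ 2 = 1 - (vx ^ 2 + vy ^ 2 + vz ^ 2) := Real.sq_sqrt h1s.le
  have hq2 : q ^ 2 = Q := Real.sq_sqrt hQpos.le
  have hq0 : 0 ≤ q := Real.sqrt_nonneg _
  have hcΓ : c / Γ = c * u := by rw [hΓ]; field_simp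
  have hD : 0 < 1 - c ^ 2 * (vx ^ 2 + vy ^ 2 + vz ^ 2) := by nlinarith
  have hAp : 0 < 1 - c ^ 2 * (vx ^ 2 + vy ^ 2 + vz ^ 2) - (1 - c ^ 2) * vx := by nlinarith
  have hAm : 0 < 1 - c ^ 2 * (vx ^ 2 + vy ^ 2 + vz ^ 2) + (1 - c ^ 2) * vx := by nlinarith
  have hsq : (c * u * q) ^ 2 = c ^ 2 * (1 - (vx ^ 2 + vy ^ 2 + vz ^ 2)) * Q := by
    rw [mul_pow, mul_pow, hu2, hq2]
  have hcuq0 : 0 ≤ c * u * q := by positivity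
  have idP : (1 - c ^ 2 * (vx ^ 2 + vy ^ 2 + vz ^ 2) - (1 - c ^ 2) * vx) ^ 2
      - (c * u * q) ^ 2
      = (1 - vx) ^ 2 * (1 - c ^ 2) * (1 - c ^ 2 * (vx ^ 2 + vy ^ 2 + vz ^ 2)) := by
    rw [hsq, hQ]; ring
  have idM : (1 - c ^ 2 * (vx ^ 2 + vy ^ 2 + vz ^ 2) + (1 - c ^ 2) * vx) ^ 2
      - (c * u * q) ^ 2
      = (1 + vx) ^ 2 * (1 - c ^ 2) * (1 - c ^ 2 * (vx ^ 2 + vy ^ 2 + vz ^ 2)) := by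
    rw [hsq, hQ]; ring
  have hposP : 0 < (1 - vx) ^ 2 * (1 - c ^ 2) * (1 - c ^ 2 * (vx ^ 2 + vy ^ 2 + vz ^ 2)) :=
    mul_pos (mul_pos (pow_pos (by linarith) 2) (by linarith)) hD
  have hposM : 0 < (1 + vx) ^ 2 * (1 - c ^ 2) * (1 - c ^ 2 * (vx ^ 2 + vy ^ 2 + vz ^ 2)) :=
    mul_pos (mul_pos (pow_pos (by linarith) 2) (by linarith)) hD
  have keyP : c * u * q < 1 - c ^ 2 * (vx ^ 2 + vy ^ 2 + vz ^ 2) - (1 - c ^ 2) * vx := by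
    by_contra h
    push_neg at h
    have h2 := pow_le_pow_left₀ hAp.le h 2
    linarith [idP, hposP]
  have keyM : c * u * q < 1 - c ^ 2 * (vx ^ 2 + vy ^ 2 + vz ^ 2) + (1 - c ^ 2) * vx := by
    by_contra h
    push_neg at h
    have h2 := pow_le_pow_left₀ hAm.le h 2
    linarith [idM, hposM]
  rw [hP, hM, hcΓ]
  constructor <;>
  · rw [abs_div, abs_of_pos hD, div_lt_one hD, abs_lt]
    constructor <;> linarith [keyP, keyM, hcuq0]
end

section
/- If matrices M, D, S, B of size (k+1)×(k+1) satisfy the SBP properties S = M D and M D + Dᵀ M = B with M diagonal and positive definite and B = diag(-1, 0, ..., 0, 1), then for any vectors of values {v_j} and {ψ_j} and any symmetric two-point function F with (v_j - v_m)ᵀ F(u_j,u_m) = ψ_j - ψ_m, the quadratic form Σ_{j,m} S_{jm} v_jᵀ F(u_j,u_m) equals ½ Σ_{j,m} B_{jm} v_jᵀ F(u_j,u_m) + ½ Σ_{j,m} S_{jm}(ψ_j - ψ_m). -/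
open Finset

/-- SBP quadratic-form identity: if `S = M D`, `M D + Dᵀ M = B` with `M` diagonal
positive definite and `B = diag(-1,0,…,0,1)`, then for a symmetric two-point flux `F`
satisfying `(v_j - v_m)ᵀ F(u_j,u_m) = ψ_j - ψ_m`,
`Σ S_{jm} v_jᵀ F(u_j,u_m) = ½ Σ B_{jm} v_jᵀ F(u_j,u_m) + ½ Σ S_{jm}(ψ_j - ψ_m)`. -/
theorem sbp_quadratic_form_identity {k n : ℕ} {α : Type*}
    (M D S B : Matrix (Fin (k + 1)) (Fin (k + 1)) ℝ)
    (hS : S = M * D)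
    (hSBP : M * D + D.transpose * M = B)
    (hMdiag : ∀ i j, i ≠ j → M i j = 0)
    (hMpos : ∀ i, 0 < M i i)
    (hB : B = Matrix.diagonal fun j =>
      if j = 0 then (-1 : ℝ) else if j = Fin.last k then 1 else 0)
    (u : Fin (k + 1) → α) (v : Fin (k + 1) → Fin n → ℝ) (ψ : Fin (k + 1) → ℝ)
    (F : α → α → Fin n → ℝ)
    (hFsym : ∀ a b, F a b = F b a)
    (hF : ∀ j m, ∑ i, (v j i - v m i) * F (u j) (u m) i = ψ j - ψ m) :
    ∑ j, ∑ m, S j m * ∑ i, v j i * F (u j) (u m) i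
      = (1 / 2) * ∑ j, ∑ m, B j m * ∑ i, v j i * F (u j) (u m) i
        + (1 / 2) * ∑ j, ∑ m, S j m * (ψ j - ψ m) := by

  have hMt : M.transpose = M := by
    ext i j
    rcases eq_or_ne i j with h | h
    · simp [h]
    · rw [Matrix.transpose_apply, hMdiag j i h.symm, hMdiag i j h]
  have hSt : ∀ j m, S j m + S m j = B j m := by
    intro j m
    have hmat : S + S.transpose = B := by
      rw [hS, ← hSBP, Matrix.transpose_mul, hMt]
    have := congrFun (congrFun (congrArg (fun X => X) hmat) j) m
    simpa [Matrix.add_apply, Matrix.transpose_apply] using this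
  have hBdiag : ∀ j m : Fin (k+1), j ≠ m → B j m = 0 := by
    intro j m h
    rw [hB]
    exact Matrix.diagonal_apply_ne _ h
  have hdiff : ∀ j m, (∑ i, v j i * F (u j) (u m) i) - (∑ i, v m i * F (u j) (u m) i)
      = ψ j - ψ m := by
    intro j m
    rw [← Finset.sum_sub_distrib]
    simp_rw [← sub_mul]
    exact hF j m
  set P : ℝ := ∑ j, ∑ m, S j m * (ψ j - ψ m) with hP
  set T : ℝ := ∑ j, ∑ m, S j m * ∑ i, v j i * F (u j) (u m) i with hT
  have h1 : T = ∑ j, ∑ m, S m j * ∑ i, v m i * F (u j) (u m) i := by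
    rw [hT, Finset.sum_comm]
    exact Finset.sum_congr rfl fun j _ => Finset.sum_congr rfl fun m _ => by
      rw [hFsym (u m) (u j)]
  have h2 : T - (∑ j, ∑ m, S j m * ∑ i, v m i * F (u j) (u m) i) = P := by
    rw [hT, hP, ← Finset.sum_sub_distrib]
    refine Finset.sum_congr rfl fun j _ => ?_
    rw [← Finset.sum_sub_distrib]
    exact Finset.sum_congr rfl fun m _ => by rw [← mul_sub, hdiff j m]
  have h3 : T = (∑ j, ∑ m, B j m * ∑ i, v m i * F (u j) (u m) i)
      - (∑ j, ∑ m, S j m * ∑ i, v m i * F (u j) (u m) i) := by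
    rw [h1, ← Finset.sum_sub_distrib]
    refine Finset.sum_congr rfl fun j _ => ?_
    rw [← Finset.sum_sub_distrib]
    refine Finset.sum_congr rfl fun m _ => ?_
    have hsm : S m j = B j m - S j m := by linarith [hSt j m]
    rw [hsm, sub_mul]
  have h4 : (∑ j, ∑ m, B j m * ∑ i, v m i * F (u j) (u m) i)
      = ∑ j, ∑ m, B j m * ∑ i, v j i * F (u j) (u m) i := by
    refine Finset.sum_congr rfl fun j _ => Finset.sum_congr rfl fun m _ => ?_
    rcases eq_or_ne j m with h | h
    · rw [h]
    · rw [hBdiag j m h]; ring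
  linarith [h2, h3, h4]
end

section
/- The x-directional entropy conservative flux for the relativistic fluid, defined by F₁ = ρ^ln ⟨Mₓ⟩, F₅ = -⟨Γ⟩(L_β ρ^ln ⟨Mₓ⟩ + ⟨Mₓ⟩⟨ρ⟩/⟨β⟩)/(⟨Mₓ⟩² + ⟨M_y⟩² + ⟨M_z⟩² - ⟨Γ⟩²), F₂ = (⟨β⟩⟨Mₓ⟩/⟨Γ⟩ F₅ + ⟨ρ⟩)/⟨β⟩, F₃ = ⟨M_y⟩/⟨Γ⟩ F₅, F₄ = ⟨M_z⟩/⟨Γ⟩ F₅, is consistent: when the left and right states are equal, F equals the exact x-flux (D vₓ, Mₓ vₓ + p, M_y vₓ, M_z vₓ, Mₓ) with D = ρΓ, M_d = ρ h Γ² v_d, where h = 1 + (γ/(γ-1)) p/ρ. -/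
/-- Consistency of the x-directional entropy conservative flux for the relativistic
fluid: when left and right states coincide (so arithmetic and logarithmic averages
equal the common value), the flux equals the exact x-flux
`(D vₓ, Mₓ vₓ + p, M_y vₓ, M_z vₓ, Mₓ)` with `D = ρΓ`, `M_d = ρ h Γ² v_d`. -/
theorem rhd_ec_flux_consistent
    (ρ p γ vx vy vz : ℝ) (hρ : 0 < ρ) (hp : 0 < p) (hγ : 1 < γ)
    (hv : vx ^ 2 + vy ^ 2 + vz ^ 2 < 1)
    (Γ β Mx My Mz Lβ h F1 F2 F3 F4 F5 : ℝ)
    (hΓ : Γ = 1 / Real.sqrt (1 - (vx ^ 2 + vy ^ 2 + vz ^ 2)))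
    (hβ : β = ρ / p)
    (hMx : Mx = Γ * vx) (hMy : My = Γ * vy) (hMz : Mz = Γ * vz)
    (hLβ : Lβ = 1 / ((γ - 1) * β) + 1)       -- β^ln = β for equal states
    (hh : h = 1 + (γ / (γ - 1)) * p / ρ)
    (hF1 : F1 = ρ * Mx)                       -- ρ^ln = ρ, ⟨Mₓ⟩ = Mₓ
    (hF5 : F5 = -(Γ * (Lβ * ρ * Mx + Mx * ρ / β)) /
      (Mx ^ 2 + My ^ 2 + Mz ^ 2 - Γ ^ 2))
    (hF2 : F2 = (β * Mx / Γ * F5 + ρ) / β)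
    (hF3 : F3 = My / Γ * F5)
    (hF4 : F4 = Mz / Γ * F5) :
    F1 = (ρ * Γ) * vx ∧
    F2 = (ρ * h * Γ ^ 2 * vx) * vx + p ∧
    F3 = (ρ * h * Γ ^ 2 * vy) * vx ∧
    F4 = (ρ * h * Γ ^ 2 * vz) * vx ∧
    F5 = ρ * h * Γ ^ 2 * vx := by
  have hs : 0 < 1 - (vx ^ 2 + vy ^ 2 + vz ^ 2) := by linarith
  have hsq : Real.sqrt (1 - (vx ^ 2 + vy ^ 2 + vz ^ 2)) ^ 2
      = 1 - (vx ^ 2 + vy ^ 2 + vz ^ 2) := Real.sq_sqrt hs.le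
  have hsne : Real.sqrt (1 - (vx ^ 2 + vy ^ 2 + vz ^ 2)) ≠ 0 := by positivity
  have hΓ2 : Γ ^ 2 * (1 - (vx ^ 2 + vy ^ 2 + vz ^ 2)) = 1 := by
    rw [hΓ]; field_simp; try rw [hsq]
  have hΓne : Γ ≠ 0 := by
    intro h0; rw [h0] at hΓ2; simp at hΓ2; try linarith
  have hden : Mx ^ 2 + My ^ 2 + Mz ^ 2 - Γ ^ 2 = -1 := by
    rw [hMx, hMy, hMz]; nlinarith [hΓ2]
  have hρne : ρ ≠ 0 := ne_of_gt hρ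
  have hpne : p ≠ 0 := ne_of_gt hp
  have hγne : γ - 1 ≠ 0 := by intro h0; apply absurd hγ; linarith
  have hβne : β ≠ 0 := by rw [hβ]; positivity
  have hF5' : F5 = ρ * h * Γ ^ 2 * vx := by
    rw [hF5, hden, hLβ, hβ, hh, hMx]
    field_simp
    ring
  refine ⟨?_, ?_, ?_, ?_, hF5'⟩
  · rw [hF1, hMx]; ring
  · rw [hF2, hF5', hMx, hβ]; field_simp
  · rw [hF3, hF5', hMy]; field_simp
  · rw [hF4, hF5', hMz]; field_simp
end

section
/- The entropy potential for the relativistic Euler equations equals the x-momentum flux of mass: ψ^x := Vᵀ f^x - F^x = ρ Γ vₓ, where V are the entropy variables, f^x = (Dvₓ, Mₓvₓ+p, M_yvₓ, M_zvₓ, Mₓ) and F^x = -ρΓs vₓ/(γ-1). -/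
/-- The entropy potential for the relativistic Euler equations equals the mass flux:
`ψ^x := Vᵀ f^x - F^x = ρ Γ vₓ`. -/
theorem rhd_entropy_potential
    (ρ p γ vx vy vz : ℝ) (hρ : 0 < ρ) (hp : 0 < p) (hγ : 1 < γ)
    (hv : vx ^ 2 + vy ^ 2 + vz ^ 2 < 1)
    (Γ h s β D Mx My Mz Fx : ℝ)
    (hΓ : Γ = 1 / Real.sqrt (1 - (vx ^ 2 + vy ^ 2 + vz ^ 2)))
    (hh : h = 1 + (γ / (γ - 1)) * p / ρ)
    (hs : s = Real.log (p * ρ ^ (-γ)))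
    (hβ : β = ρ / p)
    (hD : D = ρ * Γ)
    (hMx : Mx = ρ * h * Γ ^ 2 * vx) (hMy : My = ρ * h * Γ ^ 2 * vy)
    (hMz : Mz = ρ * h * Γ ^ 2 * vz)
    (hFx : Fx = -(ρ * Γ * s * vx) / (γ - 1)) :
    -- Vᵀ f^x - F^x = ρ Γ vₓ
    ((γ - s) / (γ - 1) + β) * (D * vx)
      + (β * Γ * vx) * (Mx * vx + p)
      + (β * Γ * vy) * (My * vx)
      + (β * Γ * vz) * (Mz * vx)
      + (-(β * Γ)) * Mx
      - Fx = ρ * Γ * vx := by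
  have h1 : (0:ℝ) < 1 - (vx ^ 2 + vy ^ 2 + vz ^ 2) := by linarith
  have hΓ2 : Γ ^ 2 * (1 - (vx ^ 2 + vy ^ 2 + vz ^ 2)) = 1 := by
    rw [hΓ]
    rw [div_pow, one_pow, Real.sq_sqrt h1.le]
    field_simp
  subst hh hβ hD hMx hMy hMz hFx
  have hγ1 : γ - 1 ≠ 0 := by linarith
  have hΓ2' : Γ ^ 2 = 1 / (1 - (vx ^ 2 + vy ^ 2 + vz ^ 2)) := by
    field_simp at hΓ2 ⊢
    linarith [hΓ2]
  rw [hΓ2']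
  field_simp
  ring
end

section
/- Primitive variable recovery: for the relativistic Euler conserved variables D = ρΓ, M = ρhΓ²|v|, 𝓔 = ρhΓ² - p with ideal EOS h = 1 + (γ/(γ-1))p/ρ, the velocity magnitude v = |v| satisfies the quartic equation v⁴ + c₃v³ + c₂v² + c₁v + c₀ = 0 with c₃ = -2γ(γ-1)M𝓔/((γ-1)²(M²+D²)), c₂ = (γ²𝓔² + 2(γ-1)M² - (γ-1)²D²)/((γ-1)²(M²+D²)), c₁ = -2γM𝓔/((γ-1)²(M²+D²)), c₀ = M²/((γ-1)²(M²+D²)). -/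
/-- Primitive variable recovery: the velocity magnitude `v` satisfies the quartic
`v⁴ + c₃v³ + c₂v² + c₁v + c₀ = 0` with the stated coefficients built from the
conserved variables `D = ρΓ`, `M = ρhΓ²v`, `𝓔 = ρhΓ² - p`. -/
theorem rhd_velocity_quartic
    (ρ p γ v : ℝ) (hρ : 0 < ρ) (hp : 0 < p) (hγ : 1 < γ)
    (hv0 : 0 ≤ v) (hv1 : v < 1)
    (Γ h D M E c0 c1 c2 c3 : ℝ)
    (hΓ : Γ = 1 / Real.sqrt (1 - v ^ 2))
    (hh : h = 1 + (γ / (γ - 1)) * p / ρ)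
    (hD : D = ρ * Γ) (hM : M = ρ * h * Γ ^ 2 * v) (hE : E = ρ * h * Γ ^ 2 - p)
    (hMpos : 0 < M)
    (hc3 : c3 = -(2 * γ * (γ - 1) * M * E) / ((γ - 1) ^ 2 * (M ^ 2 + D ^ 2)))
    (hc2 : c2 = (γ ^ 2 * E ^ 2 + 2 * (γ - 1) * M ^ 2 - (γ - 1) ^ 2 * D ^ 2)
      / ((γ - 1) ^ 2 * (M ^ 2 + D ^ 2)))
    (hc1 : c1 = -(2 * γ * M * E) / ((γ - 1) ^ 2 * (M ^ 2 + D ^ 2)))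
    (hc0 : c0 = M ^ 2 / ((γ - 1) ^ 2 * (M ^ 2 + D ^ 2))) :
    v ^ 4 + c3 * v ^ 3 + c2 * v ^ 2 + c1 * v + c0 = 0 := by
  have hs : 0 < 1 - v ^ 2 := by nlinarith
  have hΓ2 : Γ ^ 2 = 1 / (1 - v ^ 2) := by
    rw [hΓ, div_pow, one_pow, Real.sq_sqrt hs.le]
  have hΓ2m : Γ ^ 2 * (1 - v ^ 2) = 1 := by
    rw [hΓ2]; field_simp
  have hγ1 : γ - 1 ≠ 0 := by linarith
  have hDpos : 0 < D := by rw [hD, hΓ]; positivity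
  have hden : ((γ - 1) ^ 2 * (M ^ 2 + D ^ 2)) ≠ 0 := by positivity
  -- key linear identity: both sides equal γ p v
  have key : (γ - 1) * D * Γ * v * (1 - v ^ 2)
      = (γ - 1) * M * (1 - v ^ 2) - γ * (M - E * v) := by
    subst hD hM hE hh
    have hρ' : ρ ≠ 0 := hρ.ne'
    have h1 : ρ * (1 + γ / (γ - 1) * p / ρ) = ρ + γ * p / (γ - 1) := by
      field_simp
    have hd : (γ - 1) * (γ * p / (γ - 1)) = γ * p := by
      field_simp
    rw [h1]
    linear_combination (-(v * (γ - 1) * (γ * p / (γ - 1)))) * hΓ2m + (-v) * hd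
  have key2 : (γ - 1) ^ 2 * D ^ 2 * v ^ 2 * (1 - v ^ 2)
      = ((γ - 1) * M * (1 - v ^ 2) - γ * (M - E * v)) ^ 2 := by
    rw [← key]
    linear_combination (-((γ - 1) ^ 2 * D ^ 2 * v ^ 2 * (1 - v ^ 2))) * hΓ2m
  have hN : (γ - 1) ^ 2 * (M ^ 2 + D ^ 2) * v ^ 4 - 2 * γ * (γ - 1) * M * E * v ^ 3
      + (γ ^ 2 * E ^ 2 + 2 * (γ - 1) * M ^ 2 - (γ - 1) ^ 2 * D ^ 2) * v ^ 2
      - 2 * γ * M * E * v + M ^ 2 = 0 := by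
    linear_combination -key2
  have hgoal : v ^ 4 + c3 * v ^ 3 + c2 * v ^ 2 + c1 * v + c0
      = ((γ - 1) ^ 2 * (M ^ 2 + D ^ 2) * v ^ 4 - 2 * γ * (γ - 1) * M * E * v ^ 3
      + (γ ^ 2 * E ^ 2 + 2 * (γ - 1) * M ^ 2 - (γ - 1) ^ 2 * D ^ 2) * v ^ 2
      - 2 * γ * M * E * v + M ^ 2) / ((γ - 1) ^ 2 * (M ^ 2 + D ^ 2)) := by
    rw [hc3, hc2, hc1, hc0]
    field_simp
    ring
  rw [hgoal, hN, zero_div]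
end
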